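/- arXiv:0906.5007 — 2 statements merged into one kernel-verified Lean document; each statement's English description precedes it below -/
import Mathlib

section
/- Under Assumptions 1–3 on the model, let W̃ = E[W(k)] be the mean interaction matrix and let x̄ be the almost-sure consensus limit of the belief sequences x_i(k). Then: (a) there is a stochastic vector π̄ (the consensus distribution) such that W̃^k converges, as k → ∞, to the rank-one stochastic matrix e π̄ᵀ with all rows equal to π̄ᵀ; and (b) E[x̄] = Σ_{i=1}^n π̄_i x_i(0) = π̄ᵀ x(0). -/
open MeasureTheory ProbabilityTheory Matrix Filter

noncomputable section

instance matMeas {n : ℕ} : MeasurableSpace (Matrix (Fin n) (Fin n) ℝ) := MeasurableSpace.pi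

/-- the standard basis vector `e_i`. -/
def eVec {n : ℕ} (i : Fin n) : Fin n → ℝ := fun k => if k = i then 1 else 0

/-- `A_{ij} = I − (e_i−e_j)(e_i−e_j)ᵀ/2` : pairwise averaging matrix. -/
def Amat {n : ℕ} (i j : Fin n) : Matrix (Fin n) (Fin n) ℝ :=
  1 - (2⁻¹ : ℝ) • Matrix.vecMulVec (eVec i - eVec j) (eVec i - eVec j)

/-- `J_{ij} = I − (1−ε) e_i (e_i−e_j)ᵀ` : influence matrix. -/
def Jmat {n : ℕ} (ε : ℝ) (i j : Fin n) : Matrix (Fin n) (Fin n) ℝ :=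
  1 - (1 - ε) • Matrix.vecMulVec (eVec i) (eVec i - eVec j)

/-- the common law of the update matrices `W(k)` : with probability
`p_ij β_ij / n` it is `A_ij`, with probability `p_ij α_ij / n` it is `J_ij`,
and with probability `Σ_{i,j} p_ij γ_ij / n` it is the identity. -/
def lawW {n : ℕ} (p α β γ : Fin n → Fin n → ℝ) (ε : ℝ) : Measure (Matrix (Fin n) (Fin n) ℝ) :=
  ∑ i, ∑ j,
    (ENNReal.ofReal (p i j * β i j / n) • Measure.dirac (Amat i j) +
     ENNReal.ofReal (p i j * α i j / n) • Measure.dirac (Jmat ε i j) +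
     ENNReal.ofReal (p i j * γ i j / n) • Measure.dirac (1 : Matrix (Fin n) (Fin n) ℝ))

/-- `isPath E i j L` : there is a directed path of length `L` from `i` to `j`. -/
def isPath {n : ℕ} (E : Fin n → Fin n → Prop) (i j : Fin n) (L : ℕ) : Prop :=
  ∃ f : ℕ → Fin n, f 0 = i ∧ f L = j ∧ ∀ l < L, E (f l) (f (l + 1))

/-!
The mean matrix `W̃` averages stochastic matrices, so it is stochastic; its diagonal is
positive (every `A_ij`, `J_ij`, `I` has diagonal at least `ε`) and `W̃_ij > 0` whenever
`p_ij > 0`, so strong connectivity makes `W̃` primitive. For a stochastic `M` whose `m`-th power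
has all entries `≥ δ`, every row of `M ^ m` puts weight `≥ δ` on both the minimum and the
maximum of a vector `v`, so the spread `max - min` of `M ^ k *ᵥ v` shrinks by a factor `1 - δ`
every `m` steps; hence each column of `M ^ k` converges to a constant, which is (a).

For (b), `x k` is a function of `W 0, …, W (k - 1)`, which are independent of `W k`, so
`E[x (k + 1)] = W̃ *ᵥ E[x k]` and `E[x k] = W̃ ^ k *ᵥ x0`. Almost surely every `W k` is stochastic,
so `‖x k‖ ≤ ‖x0‖` and dominated convergence gives `E[x̄] = lim (W̃ ^ k *ᵥ x0) i = π̄ ⬝ᵥ x0`.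
-/

open Finset Topology

section WeightedAverage

variable {ι : Type*} [Fintype ι] {w v : ι → ℝ} {δ : ℝ} {j₀ : ι}

lemma sum_mul_le_of_le {S : ℝ} (hw : ∀ j, 0 ≤ w j) (hw1 : ∑ j, w j = 1)
    (hv : ∀ j, v j ≤ S) (hδ : δ ≤ w j₀) : ∑ j, w j * v j ≤ S - δ * (S - v j₀) := by
  classical
  have hdev : ∑ j, w j * (v j - S) ≤ w j₀ * (v j₀ - S) := by
    rw [← add_sum_erase _ _ (mem_univ j₀)]
    refine add_le_of_nonpos_right (sum_nonpos fun j _ => ?_)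
    exact mul_nonpos_of_nonneg_of_nonpos (hw j) (sub_nonpos.2 (hv j))
  have hsplit : ∑ j, w j * v j = S + ∑ j, w j * (v j - S) := by
    simp only [mul_sub, sum_sub_distrib, ← sum_mul, hw1, one_mul, add_sub_cancel]
  nlinarith [hv j₀]

lemma le_sum_mul_of_le {I : ℝ} (hw : ∀ j, 0 ≤ w j) (hw1 : ∑ j, w j = 1)
    (hv : ∀ j, I ≤ v j) (hδ : δ ≤ w j₀) : I + δ * (v j₀ - I) ≤ ∑ j, w j * v j := by
  have := sum_mul_le_of_le (v := -v) (S := -I) hw hw1 (fun j => neg_le_neg (hv j)) hδ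
  simp only [Pi.neg_apply, mul_neg, sum_neg_distrib] at this
  linarith

end WeightedAverage

lemma exists_tendsto_of_contracting_gap {I S : ℕ → ℝ} (hI : Monotone I) (hS : Antitone S)
    (hIS : ∀ k, I k ≤ S k) {m : ℕ} (hm : m ≠ 0) {r : ℝ} (hr0 : 0 ≤ r) (hr1 : r < 1)
    (hgap : ∀ k, S (k + m) - I (k + m) ≤ r * (S k - I k)) :
    ∃ c, Tendsto I atTop (𝓝 c) ∧ Tendsto S atTop (𝓝 c) := by
  have hgap_antitone : Antitone (S - I) := fun k l hkl => sub_le_sub (hS hkl) (hI hkl)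
  have hgeom : ∀ t, S (t * m) - I (t * m) ≤ r ^ t * (S 0 - I 0) := by
    intro t
    induction t with
    | zero => simp
    | succ t ih =>
      calc S ((t + 1) * m) - I ((t + 1) * m) ≤ r * (S (t * m) - I (t * m)) := by
            rw [add_one_mul]; exact hgap _
        _ ≤ r * (r ^ t * (S 0 - I 0)) := mul_le_mul_of_nonneg_left ih hr0
        _ = r ^ (t + 1) * (S 0 - I 0) := by ring
  have hgap_tendsto : Tendsto (S - I) atTop (𝓝 0) := by
    have hbound : Tendsto (fun k => r ^ (k / m) * (S 0 - I 0)) atTop (𝓝 0) := by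
      simpa using ((tendsto_pow_atTop_nhds_zero_of_lt_one hr0 hr1).comp
        (Nat.tendsto_div_const_atTop hm)).mul_const (S 0 - I 0)
    refine squeeze_zero (fun k => sub_nonneg.2 (hIS k)) (fun k => ?_) hbound
    exact (hgap_antitone (Nat.div_mul_le_self k m)).trans (hgeom (k / m))
  have hI_bdd : BddAbove (Set.range I) := ⟨S 0, by
    rintro _ ⟨k, rfl⟩; exact (hIS k).trans (hS (Nat.zero_le k))⟩
  have hI_tendsto := tendsto_atTop_ciSup hI hI_bdd
  refine ⟨_, hI_tendsto, ?_⟩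
  simpa using hI_tendsto.add hgap_tendsto

namespace Matrix

lemma mul_apply_pos {ι : Type*} [Fintype ι] {A B : Matrix ι ι ℝ} (hA : ∀ i j, 0 ≤ A i j)
    (hB : ∀ i j, 0 ≤ B i j) {i l j : ι} (hil : 0 < A i l) (hlj : 0 < B l j) :
    0 < (A * B) i j :=
  sum_pos' (fun k _ => mul_nonneg (hA i k) (hB k j)) ⟨l, mem_univ l, mul_pos hil hlj⟩

lemma pow_apply_pos_of_le {ι : Type*} [Fintype ι] [DecidableEq ι] {M : Matrix ι ι ℝ}
    (hM : ∀ i j, 0 ≤ M i j) (hdiag : ∀ i, 0 < M i i) {i j : ι}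
    {L k : ℕ} (hL : 0 < (M ^ L) i j) (hLk : L ≤ k) : 0 < (M ^ k) i j := by
  induction k, hLk using Nat.le_induction with
  | base => exact hL
  | succ k _ ih => rw [pow_succ]; exact mul_apply_pos (pow_apply_nonneg hM k) hM ih (hdiag j)

section Paths

variable {n : ℕ} {M : Matrix (Fin n) (Fin n) ℝ}

lemma pow_apply_pos_of_isPath (hM : ∀ i j, 0 ≤ M i j) {E : Fin n → Fin n → Prop}
    (hE : ∀ a b, E a b → 0 < M a b) {L : ℕ} {i j : Fin n} (hpath : isPath E i j L) :
    0 < (M ^ L) i j := by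
  induction L generalizing j with
  | zero =>
    obtain ⟨f, rfl, rfl, -⟩ := hpath
    simp
  | succ L ih =>
    obtain ⟨f, hf0, rfl, hstep⟩ := hpath
    rw [pow_succ]
    exact mul_apply_pos (pow_apply_nonneg hM L) hM
      (ih ⟨f, hf0, rfl, fun l hl => hstep l (by omega)⟩) (hE _ _ (hstep L (by omega)))

theorem isPrimitive_of_isPath (hM : ∀ i j, 0 ≤ M i j) (hdiag : ∀ i, 0 < M i i)
    {E : Fin n → Fin n → Prop} (hE : ∀ a b, E a b → 0 < M a b)
    (hconn : ∀ i j, ∃ L, isPath E i j L) : M.IsPrimitive := by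
  choose L hL using hconn
  refine ⟨hM, univ.sup (fun q : Fin n × Fin n => L q.1 q.2) + 1, Nat.succ_pos _, fun i j => ?_⟩
  refine pow_apply_pos_of_le hM hdiag (pow_apply_pos_of_isPath hM hE (hL i j)) ?_
  exact (le_sup (f := fun q : Fin n × Fin n => L q.1 q.2) (mem_univ (i, j))).trans (Nat.le_succ _)

end Paths

variable {ι : Type*} [Fintype ι] [DecidableEq ι] {M : Matrix ι ι ℝ}

section Convergence

variable [Nonempty ι] {δ : ℝ}

lemma iSup_mulVec_le (hM : M ∈ rowStochastic ℝ ι) (hδ : ∀ i j, δ ≤ M i j) (v : ι → ℝ) :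
    ⨆ i, (M *ᵥ v) i ≤ (⨆ i, v i) - δ * ((⨆ i, v i) - ⨅ i, v i) := by
  obtain ⟨j₀, hj₀⟩ := exists_eq_ciInf_of_finite (f := v)
  refine ciSup_le fun i => ?_
  rw [← hj₀]
  exact sum_mul_le_of_le (fun j => hM.1 i j) (sum_row_of_mem_rowStochastic hM i)
    (fun j => le_ciSup (Set.finite_range v).bddAbove j) (hδ i j₀)

lemma le_iInf_mulVec (hM : M ∈ rowStochastic ℝ ι) (hδ : ∀ i j, δ ≤ M i j) (v : ι → ℝ) :
    (⨅ i, v i) + δ * ((⨆ i, v i) - ⨅ i, v i) ≤ ⨅ i, (M *ᵥ v) i := by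
  obtain ⟨j₀, hj₀⟩ := exists_eq_ciSup_of_finite (f := v)
  refine le_ciInf fun i => ?_
  rw [← hj₀]
  exact le_sum_mul_of_le (fun j => hM.1 i j) (sum_row_of_mem_rowStochastic hM i)
    (fun j => ciInf_le (Set.finite_range v).bddBelow j) (hδ i j₀)

theorem exists_tendsto_pow_mulVec (hM : M ∈ rowStochastic ℝ ι) {m : ℕ} (hm : m ≠ 0)
    (hδ : 0 < δ) (hMm : ∀ i j, δ ≤ (M ^ m) i j) (v : ι → ℝ) :
    ∃ c, ∀ i, Tendsto (fun k => (M ^ k *ᵥ v) i) atTop (𝓝 c) := by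
  obtain ⟨i₀⟩ := ‹Nonempty ι›
  set S : ℕ → ℝ := fun k => ⨆ i, (M ^ k *ᵥ v) i
  set I : ℕ → ℝ := fun k => ⨅ i, (M ^ k *ᵥ v) i
  have hle_S : ∀ k i, (M ^ k *ᵥ v) i ≤ S k := fun k => le_ciSup (Set.finite_range _).bddAbove
  have hI_le : ∀ k i, I k ≤ (M ^ k *ᵥ v) i := fun k => ciInf_le (Set.finite_range _).bddBelow
  have hpow_add : ∀ k l, M ^ (k + l) *ᵥ v = M ^ l *ᵥ (M ^ k *ᵥ v) := fun k l => by
    rw [add_comm, pow_add, mulVec_mulVec]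
  have hS : Antitone S := antitone_nat_of_succ_le fun k => by
    simpa [S, hpow_add k 1] using iSup_mulVec_le hM hM.1 (M ^ k *ᵥ v)
  have hI : Monotone I := monotone_nat_of_le_succ fun k => by
    simpa [I, hpow_add k 1] using le_iInf_mulVec hM hM.1 (M ^ k *ᵥ v)
  have hMm_stoch : M ^ m ∈ rowStochastic ℝ ι := pow_mem hM m
  have hδ1 : δ ≤ 1 := (hMm i₀ i₀).trans (le_one_of_mem_rowStochastic hMm_stoch)
  have hgap : ∀ k, S (k + m) - I (k + m) ≤ (1 - δ) * (S k - I k) := fun k => by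
    have hS' := iSup_mulVec_le hMm_stoch hMm (M ^ k *ᵥ v)
    have hI' := le_iInf_mulVec hMm_stoch hMm (M ^ k *ᵥ v)
    rw [← hpow_add] at hS' hI'
    nlinarith [hI_le k i₀, hle_S k i₀]
  obtain ⟨c, hIc, hSc⟩ := exists_tendsto_of_contracting_gap hI hS
    (fun k => (hI_le k i₀).trans (hle_S k i₀)) hm (by linarith) (by linarith) hgap
  exact ⟨c, fun i => tendsto_of_tendsto_of_tendsto_of_le_of_le hIc hSc (hI_le · i) (hle_S · i)⟩

theorem IsPrimitive.exists_tendsto_pow (hM : M ∈ rowStochastic ℝ ι) (hprim : M.IsPrimitive) :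
    ∃ π : ι → ℝ, (∀ i, 0 ≤ π i) ∧ ∑ i, π i = 1 ∧
      ∀ i j, Tendsto (fun k => (M ^ k) i j) atTop (𝓝 (π j)) := by
  obtain ⟨-, m, hm, hpos⟩ := hprim
  set δ := univ.inf' univ_nonempty fun q : ι × ι => (M ^ m) q.1 q.2
  have hδ : 0 < δ := (lt_inf'_iff _).2 fun q _ => hpos q.1 q.2
  have hMm : ∀ i j, δ ≤ (M ^ m) i j := fun i j => inf'_le _ (mem_univ (i, j))
  have hcol : ∀ j, ∃ c, ∀ i, Tendsto (fun k => (M ^ k) i j) atTop (𝓝 c) := fun j => by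
    simpa [mulVec_single_one] using exists_tendsto_pow_mulVec hM hm.ne' hδ hMm (Pi.single j 1)
  choose π hπ using hcol
  obtain ⟨i₀⟩ := ‹Nonempty ι›
  refine ⟨π, fun j => ?_, ?_, fun i j => hπ j i⟩
  · exact ge_of_tendsto' (hπ j i₀) fun k => (pow_mem hM k).1 i₀ j
  · refine tendsto_nhds_unique (tendsto_finsetSum _ fun j _ => hπ j i₀) ?_
    simp [sum_row_of_mem_rowStochastic (pow_mem hM _)]

end Convergence

lemma norm_mulVec_le_of_mem_rowStochastic (hM : M ∈ rowStochastic ℝ ι) (v : ι → ℝ) :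
    ‖M *ᵥ v‖ ≤ ‖v‖ := by
  refine (pi_norm_le_iff_of_nonneg (norm_nonneg v)).2 fun i => ?_
  calc ‖∑ j, M i j * v j‖ ≤ ∑ j, M i j * ‖v‖ := by
        refine (norm_sum_le _ _).trans (sum_le_sum fun j _ => ?_)
        rw [norm_mul, Real.norm_of_nonneg (hM.1 i j)]
        exact mul_le_mul_of_nonneg_left (norm_le_pi_norm v j) (hM.1 i j)
    _ = ‖v‖ := by rw [← sum_mul, sum_row_of_mem_rowStochastic hM i, one_mul]

variable {Ω : Type*} [MeasurableSpace Ω] {μ : Measure Ω} [IsProbabilityMeasure μ]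
  {X : Ω → Matrix ι ι ℝ}

lemma integrable_apply_of_ae_mem_rowStochastic (hX : ∀ᵐ ω ∂μ, X ω ∈ rowStochastic ℝ ι)
    {i j : ι} (hXij : AEStronglyMeasurable (fun ω => X ω i j) μ) :
    Integrable (fun ω => X ω i j) μ := by
  refine Integrable.of_bound hXij 1 ?_
  filter_upwards [hX] with ω hω
  rw [Real.norm_of_nonneg (hω.1 i j)]
  exact le_one_of_mem_rowStochastic hω

lemma integral_mem_rowStochastic (hX : ∀ᵐ ω ∂μ, X ω ∈ rowStochastic ℝ ι)
    (hXm : ∀ i j, AEStronglyMeasurable (fun ω => X ω i j) μ) :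
    of (fun i j => ∫ ω, X ω i j ∂μ) ∈ rowStochastic ℝ ι := by
  refine mem_rowStochastic_iff_sum.2 ⟨fun i j => ?_, fun i => ?_⟩
  · exact integral_nonneg_of_ae (hX.mono fun ω hω => hω.1 i j)
  · simp only [of_apply]
    rw [← integral_finsetSum _ fun j _ => integrable_apply_of_ae_mem_rowStochastic hX (hXm i j),
      integral_congr_ae (hX.mono fun ω hω => sum_row_of_mem_rowStochastic hω i)]
    simp

end Matrix

section InteractionMatrices

variable {n : ℕ} (a b : Fin n)

lemma Amat_apply (i j : Fin n) : Amat a b i j =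
    (if i = j then 1 else 0) -
      2⁻¹ * (((if i = a then 1 else 0) - if i = b then 1 else 0) *
        ((if j = a then 1 else 0) - if j = b then 1 else 0)) := by
  simp [Amat, eVec, Matrix.one_apply, Matrix.vecMulVec_apply]

lemma Jmat_apply (ε : ℝ) (i j : Fin n) : Jmat ε a b i j =
    (if i = j then 1 else 0) -
      (1 - ε) * ((if i = a then 1 else 0) *
        ((if j = a then 1 else 0) - if j = b then 1 else 0)) := by
  simp [Jmat, eVec, Matrix.one_apply, Matrix.vecMulVec_apply]

lemma Amat_mem_rowStochastic : Amat a b ∈ rowStochastic ℝ (Fin n) := by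
  refine mem_rowStochastic_iff_sum.2 ⟨fun i j => ?_, fun i => ?_⟩
  · rw [Amat_apply]; split_ifs <;> simp_all <;> norm_num
  · simp [Amat_apply, sum_sub_distrib, ← mul_sum]

lemma Jmat_mem_rowStochastic {ε : ℝ} (h0 : 0 ≤ ε) (h1 : ε ≤ 1) :
    Jmat ε a b ∈ rowStochastic ℝ (Fin n) := by
  refine mem_rowStochastic_iff_sum.2 ⟨fun i j => ?_, fun i => ?_⟩
  · rw [Jmat_apply]; split_ifs <;> simp_all
  · simp [Jmat_apply, sum_sub_distrib, ← mul_sum]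

lemma half_le_Amat_apply_self (i : Fin n) : 1 / 2 ≤ Amat a b i i := by
  rw [Amat_apply]; split_ifs <;> simp_all <;> norm_num

lemma le_Jmat_apply_self {ε : ℝ} (h : ε ≤ 1) (i : Fin n) : ε ≤ Jmat ε a b i i := by
  rw [Jmat_apply]; split_ifs <;> simp_all

variable {a b}

lemma Amat_apply_of_ne (hab : a ≠ b) : Amat a b a b = 1 / 2 := by
  simp [Amat_apply, hab, hab.symm]

lemma Jmat_apply_of_ne (ε : ℝ) (hab : a ≠ b) : Jmat ε a b a b = 1 - ε := by
  simp [Jmat_apply, hab, hab.symm]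

end InteractionMatrices

instance {n : ℕ} : MeasurableSingletonClass (Matrix (Fin n) (Fin n) ℝ) :=
  inferInstanceAs (MeasurableSingletonClass (Fin n → Fin n → ℝ))

lemma measurable_matrix_apply {n : ℕ} (i j : Fin n) :
    Measurable fun M : Matrix (Fin n) (Fin n) ℝ => M i j :=
  (measurable_pi_apply j).comp (measurable_pi_apply i)

section LawW

variable {n : ℕ} {p α β γ : Fin n → Fin n → ℝ} {ε : ℝ}

lemma ae_mem_rowStochastic_lawW (hε0 : 0 ≤ ε) (hε1 : ε ≤ 1) :
    ∀ᵐ M ∂lawW p α β γ ε, M ∈ rowStochastic ℝ (Fin n) := by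
  refine mem_ae_iff.2 ?_
  simp [lawW, Amat_mem_rowStochastic, Jmat_mem_rowStochastic _ _ hε0 hε1,
    (rowStochastic ℝ (Fin n)).one_mem]

lemma integral_lawW (hp : ∀ i j, 0 ≤ p i j) (hα : ∀ i j, 0 ≤ α i j) (hβ : ∀ i j, 0 ≤ β i j)
    (hγ : ∀ i j, 0 ≤ γ i j) (f : Matrix (Fin n) (Fin n) ℝ → ℝ) :
    ∫ M, f M ∂lawW p α β γ ε =
      ∑ a, ∑ b, p a b / n * (β a b * f (Amat a b) + α a b * f (Jmat ε a b) + γ a b * f 1) := by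
  have hdirac : ∀ M, Integrable f (Measure.dirac M) := fun M => integrable_dirac enorm_lt_top
  have hsmul : ∀ (c : ℝ) M, Integrable f (ENNReal.ofReal c • Measure.dirac M) :=
    fun c M => (hdirac M).smul_measure ENNReal.ofReal_ne_top
  have hterm : ∀ a b, Integrable f
      (ENNReal.ofReal (p a b * β a b / n) • Measure.dirac (Amat a b) +
        ENNReal.ofReal (p a b * α a b / n) • Measure.dirac (Jmat ε a b) +
        ENNReal.ofReal (p a b * γ a b / n) • Measure.dirac 1) :=
    fun a b => ((hsmul _ _).add_measure (hsmul _ _)).add_measure (hsmul _ _)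
  rw [lawW, integral_finsetSum_measure fun a _ =>
    (integrable_finsetSum_measure).2 fun b _ => hterm a b]
  refine sum_congr rfl fun a _ => ?_
  rw [integral_finsetSum_measure fun b _ => hterm a b]
  refine sum_congr rfl fun b _ => ?_
  rw [integral_add_measure ((hsmul _ _).add_measure (hsmul _ _)) (hsmul _ _),
    integral_add_measure (hsmul _ _) (hsmul _ _)]
  have hweight : ∀ c : Fin n → Fin n → ℝ, (∀ i j, 0 ≤ c i j) →
      (ENNReal.ofReal (p a b * c a b / n)).toReal = p a b * c a b / n :=
    fun c hc => ENNReal.toReal_ofReal (div_nonneg (mul_nonneg (hp a b) (hc a b)) n.cast_nonneg)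
  simp only [integral_smul_measure, integral_dirac, smul_eq_mul, hweight β hβ, hweight α hα,
    hweight γ hγ]
  ring

lemma le_integral_lawW_apply (hp : ∀ i j, 0 ≤ p i j) (hα : ∀ i j, 0 ≤ α i j)
    (hβ : ∀ i j, 0 ≤ β i j) (hγ : ∀ i j, 0 ≤ γ i j) (hε0 : 0 ≤ ε) (hε1 : ε ≤ 1) (a b i j : Fin n) :
    p a b / n * (β a b * Amat a b i j + α a b * Jmat ε a b i j +
      γ a b * (1 : Matrix (Fin n) (Fin n) ℝ) i j) ≤ ∫ M, M i j ∂lawW p α β γ ε := by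
  set term : Fin n → Fin n → ℝ := fun a b => p a b / n * (β a b * Amat a b i j +
    α a b * Jmat ε a b i j + γ a b * (1 : Matrix (Fin n) (Fin n) ℝ) i j)
  have hterm : ∀ a b, 0 ≤ term a b := fun a b =>
    mul_nonneg (div_nonneg (hp a b) n.cast_nonneg) <| add_nonneg (add_nonneg
      (mul_nonneg (hβ a b) ((Amat_mem_rowStochastic a b).1 i j))
      (mul_nonneg (hα a b) ((Jmat_mem_rowStochastic a b hε0 hε1).1 i j)))
      (mul_nonneg (hγ a b) ((rowStochastic ℝ (Fin n)).one_mem.1 i j))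
  rw [integral_lawW hp hα hβ hγ]
  calc term a b ≤ ∑ b', term a b' := single_le_sum (fun b' _ => hterm a b') (mem_univ b)
    _ ≤ ∑ a', ∑ b', term a' b' :=
      single_le_sum (f := fun a' => ∑ b', term a' b')
        (fun a' _ => sum_nonneg fun b' _ => hterm a' b') (mem_univ a)

lemma integral_lawW_apply_self_pos (hp : ∀ i j, 0 ≤ p i j) (hα : ∀ i j, 0 ≤ α i j)
    (hβ : ∀ i j, 0 ≤ β i j) (hγ : ∀ i j, 0 ≤ γ i j) (habg : ∀ i j, α i j + β i j + γ i j = 1)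
    (hε0 : 0 < ε) (hε : ε ≤ 1 / 2) {a b : Fin n} (hpab : 0 < p a b) (i : Fin n) :
    0 < ∫ M, M i i ∂lawW p α β γ ε := by
  refine lt_of_lt_of_le ?_ (le_integral_lawW_apply hp hα hβ hγ hε0.le (by linarith) a b i i)
  have hA := half_le_Amat_apply_self a b i
  have hJ := le_Jmat_apply_self a b (by linarith : ε ≤ 1) i
  have hdiag : ε ≤ β a b * Amat a b i i + α a b * Jmat ε a b i i +
      γ a b * (1 : Matrix (Fin n) (Fin n) ℝ) i i := by
    rw [Matrix.one_apply_eq]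
    nlinarith [habg a b, hα a b, hβ a b, hγ a b]
  exact mul_pos (div_pos hpab (Nat.cast_pos.2 a.pos)) (hε0.trans_le hdiag)

lemma integral_lawW_apply_pos (hp : ∀ i j, 0 ≤ p i j) (hα : ∀ i j, 0 ≤ α i j)
    (hβ : ∀ i j, 0 ≤ β i j) (hγ : ∀ i j, 0 ≤ γ i j) (habg : ∀ i j, α i j + β i j + γ i j = 1)
    (hint : ∀ i j, 0 < p i j → 0 < β i j + α i j) (hε0 : 0 < ε) (hε : ε ≤ 1 / 2) {a b : Fin n}
    (hpab : 0 < p a b) : 0 < ∫ M, M a b ∂lawW p α β γ ε := by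
  obtain rfl | hab := eq_or_ne a b
  · exact integral_lawW_apply_self_pos hp hα hβ hγ habg hε0 hε hpab a
  refine lt_of_lt_of_le ?_ (le_integral_lawW_apply hp hα hβ hγ hε0.le (by linarith) a b a b)
  rw [Amat_apply_of_ne hab, Jmat_apply_of_ne ε hab, Matrix.one_apply_ne hab]
  have hαβ := hint a b hpab
  exact mul_pos (div_pos hpab (Nat.cast_pos.2 a.pos)) (by nlinarith [hα a b, hβ a b])

end LawW

lemma Measurable.matrix_mulVec {n : ℕ} {α : Type*} {_ : MeasurableSpace α}
    {A : α → Matrix (Fin n) (Fin n) ℝ} {v : α → Fin n → ℝ} (hA : Measurable A)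
    (hv : Measurable v) : Measurable fun a => A a *ᵥ v a :=
  measurable_pi_lambda _ fun i => by
    simp only [mulVec, dotProduct]
    exact Finset.measurable_sum _ fun j _ =>
      ((measurable_matrix_apply i j).comp hA).mul ((measurable_pi_apply j).comp hv)

section RandomProducts

variable {n : ℕ} {Ω : Type*} {W : ℕ → Ω → Matrix (Fin n) (Fin n) ℝ} {x : ℕ → Ω → Fin n → ℝ}
  {x0 : Fin n → ℝ}

abbrev sigmaBefore (W : ℕ → Ω → Matrix (Fin n) (Fin n) ℝ) (k : ℕ) : MeasurableSpace Ω :=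
  ⨆ l ∈ Set.Iio k, MeasurableSpace.comap (W l) matMeas

lemma sigmaBefore_mono : Monotone (sigmaBefore W) :=
  fun _ _ hkk' => biSup_mono fun _ hl => lt_of_lt_of_le hl hkk'

lemma measurable_sigmaBefore {l k : ℕ} (hlk : l < k) : Measurable[sigmaBefore W k] (W l) :=
  (comap_measurable (W l)).mono
    (le_iSup₂ (f := fun l _ => MeasurableSpace.comap (W l) matMeas) l hlk) le_rfl

lemma measurable_iterate_sigmaBefore (hx0 : ∀ ω, x 0 ω = x0)
    (hxrec : ∀ k ω, x (k + 1) ω = W k ω *ᵥ x k ω) (k : ℕ) :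
    Measurable[sigmaBefore W k] (x k) := by
  induction k with
  | zero => rw [funext hx0]; exact measurable_const
  | succ k ih =>
    rw [funext (hxrec k)]
    exact (measurable_sigmaBefore k.lt_succ_self).matrix_mulVec
      (ih.mono (sigmaBefore_mono k.le_succ) le_rfl)

variable [MeasurableSpace Ω] {μ : Measure Ω}

lemma measurable_iterate (hWmeas : ∀ k, Measurable (W k)) (hx0 : ∀ ω, x 0 ω = x0)
    (hxrec : ∀ k ω, x (k + 1) ω = W k ω *ᵥ x k ω) (k : ℕ) : Measurable (x k) :=
  (measurable_iterate_sigmaBefore hx0 hxrec k).mono (iSup₂_le fun l _ => (hWmeas l).comap_le) le_rfl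

lemma indepFun_iterate_apply (hWmeas : ∀ k, Measurable (W k))
    (hWindep : iIndepFun (m := fun _ => matMeas) W μ) (hx0 : ∀ ω, x 0 ω = x0)
    (hxrec : ∀ k ω, x (k + 1) ω = W k ω *ᵥ x k ω) (k : ℕ) (i j : Fin n) :
    IndepFun (fun ω => W k ω i j) (fun ω => x k ω j) μ := by
  have hindep := indep_iSup_of_disjoint (fun l => (hWmeas l).comap_le) hWindep.iIndep
    (S := {k}) (T := Set.Iio k) (by simp)
  rw [IndepFun_iff_Indep]
  refine indep_of_indep_of_le hindep ?_ ?_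
  · exact ((measurable_matrix_apply i j).comp (comap_measurable (W k))).comap_le.trans
      (le_iSup₂ (f := fun l _ => MeasurableSpace.comap (W l) matMeas) k rfl)
  · exact ((measurable_pi_apply j).comp (measurable_iterate_sigmaBefore hx0 hxrec k)).comap_le

lemma norm_iterate_le (hWstoch : ∀ k, ∀ᵐ ω ∂μ, W k ω ∈ rowStochastic ℝ (Fin n))
    (hx0 : ∀ ω, x 0 ω = x0) (hxrec : ∀ k ω, x (k + 1) ω = W k ω *ᵥ x k ω) :
    ∀ᵐ ω ∂μ, ∀ k, ‖x k ω‖ ≤ ‖x0‖ := by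
  filter_upwards [ae_all_iff.2 hWstoch] with ω hω k
  induction k with
  | zero => rw [hx0]
  | succ k ih => rw [hxrec]; exact (norm_mulVec_le_of_mem_rowStochastic (hω k) _).trans ih

theorem integral_iterate_eq_pow_mulVec [IsProbabilityMeasure μ] (hWmeas : ∀ k, Measurable (W k))
    (hWindep : iIndepFun (m := fun _ => matMeas) W μ)
    (hWstoch : ∀ k, ∀ᵐ ω ∂μ, W k ω ∈ rowStochastic ℝ (Fin n)) {M : Matrix (Fin n) (Fin n) ℝ}
    (hM : ∀ k i j, ∫ ω, W k ω i j ∂μ = M i j) (hx0 : ∀ ω, x 0 ω = x0)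
    (hxrec : ∀ k ω, x (k + 1) ω = W k ω *ᵥ x k ω) (k : ℕ) (i : Fin n) :
    ∫ ω, x k ω i ∂μ = (M ^ k *ᵥ x0) i := by
  induction k generalizing i with
  | zero => simp [hx0]
  | succ k ih =>
    have hWij : ∀ j, Measurable fun ω => W k ω i j :=
      fun j => (measurable_matrix_apply i j).comp (hWmeas k)
    have hxj : ∀ j, Measurable fun ω => x k ω j :=
      fun j => (measurable_pi_apply j).comp (measurable_iterate hWmeas hx0 hxrec k)
    have hint : ∀ j, Integrable (fun ω => W k ω i j * x k ω j) μ := fun j => by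
      refine Integrable.of_bound ((hWij j).mul (hxj j)).aestronglyMeasurable ‖x0‖ ?_
      filter_upwards [hWstoch k, norm_iterate_le hWstoch hx0 hxrec] with ω hω hx
      rw [norm_mul, Real.norm_of_nonneg (hω.1 i j)]
      exact (mul_le_of_le_one_left (norm_nonneg _) (le_one_of_mem_rowStochastic hω)).trans
        ((norm_le_pi_norm _ j).trans (hx k))
    calc ∫ ω, x (k + 1) ω i ∂μ = ∑ j, ∫ ω, W k ω i j * x k ω j ∂μ := by
          simp only [hxrec, mulVec, dotProduct]
          exact integral_finsetSum _ fun j _ => hint j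
      _ = ∑ j, M i j * (M ^ k *ᵥ x0) j := by
          refine sum_congr rfl fun j _ => ?_
          rw [(indepFun_iterate_apply hWmeas hWindep hx0 hxrec k i j
            ).integral_fun_mul_eq_mul_integral (hWij j).aestronglyMeasurable
            (hxj j).aestronglyMeasurable, hM, ih]
      _ = (M ^ (k + 1) *ᵥ x0) i := by rw [pow_succ', ← mulVec_mulVec]; rfl

theorem integral_limit_eq [Nonempty (Fin n)] [IsProbabilityMeasure μ]
    (hWmeas : ∀ k, Measurable (W k)) (hWindep : iIndepFun (m := fun _ => matMeas) W μ)
    (hWstoch : ∀ k, ∀ᵐ ω ∂μ, W k ω ∈ rowStochastic ℝ (Fin n)) {M : Matrix (Fin n) (Fin n) ℝ}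
    (hM : ∀ k i j, ∫ ω, W k ω i j ∂μ = M i j) (hx0 : ∀ ω, x 0 ω = x0)
    (hxrec : ∀ k ω, x (k + 1) ω = W k ω *ᵥ x k ω) {π : Fin n → ℝ}
    (hπ : ∀ i j, Tendsto (fun k => (M ^ k) i j) atTop (𝓝 (π j))) {xbar : Ω → ℝ}
    (hxbar : ∀ᵐ ω ∂μ, ∀ i, Tendsto (fun k => x k ω i) atTop (𝓝 (xbar ω))) :
    ∫ ω, xbar ω ∂μ = ∑ i, π i * x0 i := by
  obtain ⟨i₀⟩ := ‹Nonempty (Fin n)›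
  have hmean : Tendsto (fun k => ∫ ω, x k ω i₀ ∂μ) atTop (𝓝 (∑ j, π j * x0 j)) := by
    simp only [integral_iterate_eq_pow_mulVec hWmeas hWindep hWstoch hM hx0 hxrec]
    exact tendsto_finsetSum _ fun j _ => (hπ i₀ j).mul_const (x0 j)
  refine tendsto_nhds_unique ?_ hmean
  have hxi : ∀ k, Measurable fun ω => x k ω i₀ :=
    fun k => (measurable_pi_apply i₀).comp (measurable_iterate hWmeas hx0 hxrec k)
  refine tendsto_integral_of_dominated_convergence (fun _ => ‖x0‖)
    (fun k => (hxi k).aestronglyMeasurable) (integrable_const _) (fun k => ?_)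
    (hxbar.mono fun ω h => h i₀)
  exact (norm_iterate_le hWstoch hx0 hxrec).mono fun ω h => (norm_le_pi_norm _ i₀).trans (h k)

end RandomProducts

theorem stmt_3_general {n : ℕ} (hn : 2 ≤ n)
    (p α β γ : Fin n → Fin n → ℝ)
    (hp_nonneg : ∀ i j, 0 ≤ p i j) (hp_row : ∀ i, ∑ j, p i j = 1)
    (hconn : ∀ i j : Fin n, ∃ L, isPath (fun a b => 0 < p a b) i j L)
    (hα : ∀ i j, 0 ≤ α i j) (hβ : ∀ i j, 0 ≤ β i j) (hγ : ∀ i j, 0 ≤ γ i j)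
    (habg : ∀ i j, α i j + β i j + γ i j = 1)
    (hint : ∀ i j, 0 < p i j → 0 < β i j + α i j)
    (ε : ℝ) (hε0 : 0 < ε) (hε : ε ≤ 1 / 2)
    {Ω : Type*} [MeasureSpace Ω] [IsProbabilityMeasure (ℙ : Measure Ω)]
    (W : ℕ → Ω → Matrix (Fin n) (Fin n) ℝ)
    (hWmeas : ∀ k, Measurable (W k))
    (hWlaw : ∀ k, Measure.map (W k) ℙ = lawW p α β γ ε)
    (hWindep : iIndepFun (m := fun _ => matMeas) W ℙ)
    (x0 : Fin n → ℝ) (x : ℕ → Ω → Fin n → ℝ)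
    (hx0 : ∀ ω, x 0 ω = x0)
    (hxrec : ∀ k ω, x (k + 1) ω = (W k ω).mulVec (x k ω))
    -- the mean interaction matrix W̃ = E[W(k)]
    (Wtilde : Matrix (Fin n) (Fin n) ℝ)
    (hWtilde : ∀ i j, Wtilde i j = ∫ ω, W 0 ω i j ∂(ℙ : Measure Ω))
    -- x̄ is the almost-sure consensus limit of the beliefs
    (xbar : Ω → ℝ)
    (hxbar : ∀ᵐ ω ∂(ℙ : Measure Ω), ∀ i, Tendsto (fun k => x k ω i) atTop (nhds (xbar ω))) :
    ∃ πbar : Fin n → ℝ, (∀ i, 0 ≤ πbar i) ∧ (∑ i, πbar i = 1) ∧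
      (∀ i j, Tendsto (fun k => (Wtilde ^ k) i j) atTop (nhds (πbar j))) ∧
      ∫ ω, xbar ω ∂(ℙ : Measure Ω) = ∑ i, πbar i * x0 i := by
  have : Nonempty (Fin n) := ⟨⟨0, by omega⟩⟩
  have hlaw : ∀ k i j, ∫ ω, W k ω i j ∂ℙ = ∫ M, M i j ∂lawW p α β γ ε := fun k i j => by
    rw [← hWlaw k, integral_map (hWmeas k).aemeasurable
      (measurable_matrix_apply i j).aestronglyMeasurable]
  have hWstoch : ∀ k, ∀ᵐ ω ∂ℙ, W k ω ∈ rowStochastic ℝ (Fin n) := fun k =>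
    ae_of_ae_map (hWmeas k).aemeasurable
      (hWlaw k ▸ ae_mem_rowStochastic_lawW hε0.le (by linarith))
  have hWt_stoch : Wtilde ∈ rowStochastic ℝ (Fin n) := by
    convert integral_mem_rowStochastic (hWstoch 0) fun i j =>
      ((measurable_matrix_apply i j).comp (hWmeas 0)).aestronglyMeasurable
    ext i j; exact hWtilde i j
  have hWt_pos : ∀ a b, 0 < p a b → 0 < Wtilde a b := fun a b hpab => by
    rw [hWtilde, hlaw]; exact integral_lawW_apply_pos hp_nonneg hα hβ hγ habg hint hε0 hε hpab
  have hWt_diag : ∀ i, 0 < Wtilde i i := fun i => by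
    obtain ⟨j, -, hj⟩ := exists_ne_zero_of_sum_ne_zero ((hp_row i).trans_ne one_ne_zero)
    rw [hWtilde, hlaw]
    exact integral_lawW_apply_self_pos hp_nonneg hα hβ hγ habg hε0 hε
      ((hp_nonneg i j).lt_of_ne' hj) i
  obtain ⟨π, hπ0, hπ1, hπ⟩ :=
    (isPrimitive_of_isPath hWt_stoch.1 hWt_diag hWt_pos hconn).exists_tendsto_pow hWt_stoch
  refine ⟨π, hπ0, hπ1, hπ, integral_limit_eq hWmeas hWindep hWstoch ?_ hx0 hxrec hπ hxbar⟩
  intro k i j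
  rw [hWtilde, hlaw, hlaw]

/-- Theorem 2: under Assumptions 1–3, letting `W̃ = E[W(k)]` be the mean
interaction matrix and `x̄` the almost-sure consensus limit of the beliefs,
(a) `W̃^k` converges to the rank-one stochastic matrix `e π̄ᵀ` for a stochastic
vector `π̄` (the consensus distribution), and (b) `E[x̄] = π̄ᵀ x(0)`. -/
theorem stmt_3 {n : ℕ} (hn : 2 ≤ n)
    (p α β γ : Fin n → Fin n → ℝ)
    (hp_diag : ∀ i, p i i = 0) (hp_nonneg : ∀ i j, 0 ≤ p i j) (hp_row : ∀ i, ∑ j, p i j = 1)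
    (hconn : ∀ i j : Fin n, ∃ L, isPath (fun a b => 0 < p a b) i j L)
    (hα : ∀ i j, 0 ≤ α i j) (hβ : ∀ i j, 0 ≤ β i j) (hγ : ∀ i j, 0 ≤ γ i j)
    (habg : ∀ i j, α i j + β i j + γ i j = 1)
    (hint : ∀ i j, 0 < p i j → 0 < β i j + α i j)
    (ε : ℝ) (hε0 : 0 < ε) (hε : ε ≤ 1 / 2)
    {Ω : Type*} [MeasureSpace Ω] [IsProbabilityMeasure (ℙ : Measure Ω)]
    (W : ℕ → Ω → Matrix (Fin n) (Fin n) ℝ)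
    (hWmeas : ∀ k, Measurable (W k))
    (hWlaw : ∀ k, Measure.map (W k) ℙ = lawW p α β γ ε)
    (hWindep : iIndepFun (m := fun _ => matMeas) W ℙ)
    (x0 : Fin n → ℝ) (x : ℕ → Ω → Fin n → ℝ)
    (hx0 : ∀ ω, x 0 ω = x0)
    (hxrec : ∀ k ω, x (k + 1) ω = (W k ω).mulVec (x k ω))
    -- the mean interaction matrix W̃ = E[W(k)]
    (Wtilde : Matrix (Fin n) (Fin n) ℝ)
    (hWtilde : ∀ i j, Wtilde i j = ∫ ω, W 0 ω i j ∂(ℙ : Measure Ω))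
    -- x̄ is the almost-sure consensus limit of the beliefs
    (xbar : Ω → ℝ) (hxbar_meas : Measurable xbar)
    (hxbar : ∀ᵐ ω ∂(ℙ : Measure Ω), ∀ i, Tendsto (fun k => x k ω i) atTop (nhds (xbar ω))) :
    ∃ πbar : Fin n → ℝ, (∀ i, 0 ≤ πbar i) ∧ (∑ i, πbar i = 1) ∧
      (∀ i j, Tendsto (fun k => (Wtilde ^ k) i j) atTop (nhds (πbar j))) ∧
      ∫ ω, xbar ω ∂(ℙ : Measure Ω) = ∑ i, πbar i * x0 i :=
  stmt_3_general hn p α β γ hp_nonneg hp_row hconn hα hβ hγ habg hint ε hε0 hε W hWmeas hWlaw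
    hWindep x0 x hx0 hxrec Wtilde hWtilde xbar hxbar
end
end

section
/- Under Assumptions 1–3 on the model, let π̄ be the consensus distribution. Then the ℓ2-norm of the difference between π̄ and the uniform vector satisfies ‖π̄ − (1/n)e‖₂ ≤ (1/(1−λ₂(T))) · (Σ_{i,j} p_ij α_ij)/n, where λ₂(T) is the second largest eigenvalue of the symmetric matrix T. -/
open Matrix Filter

noncomputable section

/-- the social network matrix `T = (1/n) Σ_{i,j} p_ij [(1−γ_ij) A_ij + γ_ij I]`. -/
def socT {n : ℕ} (p γ : Fin n → Fin n → ℝ) : Matrix (Fin n) (Fin n) ℝ :=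
  ((n : ℝ)⁻¹) • ∑ i, ∑ j, p i j •
    ((1 - γ i j) • Amat i j + γ i j • (1 : Matrix (Fin n) (Fin n) ℝ))

/-- the influence matrix `D = (1/n) Σ_{i,j} p_ij α_ij (J_ij − A_ij)`. -/
def infD {n : ℕ} (p α : Fin n → Fin n → ℝ) (ε : ℝ) : Matrix (Fin n) (Fin n) ℝ :=
  ((n : ℝ)⁻¹) • ∑ i, ∑ j, (p i j * α i j) • (Jmat ε i j - Amat i j)

/-!
Put `v = π̄ - e/n`. Stationarity together with `eᵀ(I - T) = 0` gives `vᵀ(I - T) = π̄ᵀD`. The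
Dirichlet form `uᵀ(I - T)u = (1/n) Σ p_ij (1 - γ_ij) (u_i - u_j)² / 2` vanishes only on
constant vectors because the meeting graph is strongly connected, so the eigenspace of `T` for the
eigenvalue `1` is the line of constants: hence `λ₂ < 1`, and `v`, whose entries sum to `0`, is
orthogonal to it. Expanding in an orthonormal eigenbasis of `T` then gives
`(1 - λ₂)‖v‖² ≤ vᵀ(I - T)v = ⟪π̄ᵀD, v⟫ ≤ ‖π̄ᵀD‖ ‖v‖`. Finally `π̄ᵀ(J_ij - A_ij)` is a multiple of
`e_i - e_j` with coefficient in `[-1/2, 0]`, so `‖π̄ᵀD‖ ≤ (Σ p_ij α_ij) / n`.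
-/

open WithLp

lemma EuclideanSpace.inner_toLp_right {ι : Type*} [Fintype ι] (x : EuclideanSpace ℝ ι)
    (v : ι → ℝ) : inner ℝ x (toLp 2 v) = v ⬝ᵥ ofLp x := by
  rw [EuclideanSpace.inner_eq_star_dotProduct, star_trivial]

lemma EuclideanSpace.inner_toLp_left {ι : Type*} [Fintype ι] (v : ι → ℝ)
    (x : EuclideanSpace ℝ ι) : inner ℝ (toLp 2 v) x = v ⬝ᵥ ofLp x := by
  rw [real_inner_comm, EuclideanSpace.inner_toLp_right]

lemma EuclideanSpace.norm_toLp_sq {ι : Type*} [Fintype ι] (v : ι → ℝ) :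
    ‖toLp 2 v‖ ^ 2 = v ⬝ᵥ v := by
  rw [← real_inner_self_eq_norm_sq, EuclideanSpace.inner_toLp_right]

lemma EuclideanSpace.norm_toLp {ι : Type*} [Fintype ι] (v : ι → ℝ) :
    ‖toLp 2 v‖ = √(∑ k, v k ^ 2) := by
  simp only [EuclideanSpace.norm_eq, Real.norm_eq_abs, sq_abs]

lemma sq_dotProduct_of_const {ι : Type*} [Fintype ι] {u w : ι → ℝ} (hu : ∀ k l, u k = u l)
    (hw : ∀ k l, w k = w l) : (u ⬝ᵥ w) ^ 2 = (u ⬝ᵥ u) * (w ⬝ᵥ w) := by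
  rcases isEmpty_or_nonempty ι with _ | ⟨⟨k⟩⟩
  · simp [dotProduct]
  · simp only [dotProduct, hu _ k, hw _ k, Finset.sum_const, nsmul_eq_mul]
    ring

lemma dotProduct_eq_zero_of_const {ι : Type*} [Fintype ι] {u v : ι → ℝ}
    (hu : ∀ k l, u k = u l) (hv : ∑ k, v k = 0) : v ⬝ᵥ u = 0 := by
  rcases isEmpty_or_nonempty ι with _ | ⟨⟨k⟩⟩
  · simp [dotProduct]
  · simp only [dotProduct, hu _ k, ← Finset.sum_mul, hv, zero_mul]

lemma le_div_of_mul_sq_le {a b x : ℝ} (ha : 0 < a) (hb : 0 ≤ b) (hx : 0 ≤ x)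
    (h : a * x ^ 2 ≤ b * x) : x ≤ b / a := by
  rw [le_div_iff₀ ha]
  rcases hx.eq_or_lt with rfl | hx
  · simpa using hb
  · nlinarith

namespace Matrix.IsHermitian

lemma vecMul_eq_mulVec {ι : Type*} [Fintype ι] {A : Matrix ι ι ℝ} (hA : A.IsHermitian)
    (v : ι → ℝ) : v ᵥ* A = A *ᵥ v := by
  rw [← mulVec_transpose, ← conjTranspose_eq_transpose_of_trivial, hA.eq]

variable {ι : Type*} [Fintype ι] [DecidableEq ι] {A : Matrix ι ι ℝ}

lemma mulVec_dotProduct_eigenvectorBasis (hA : A.IsHermitian) (v : ι → ℝ) (i : ι) :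
    (A *ᵥ v) ⬝ᵥ ⇑(hA.eigenvectorBasis i) =
      hA.eigenvalues i * (v ⬝ᵥ ⇑(hA.eigenvectorBasis i)) := by
  rw [← hA.vecMul_eq_mulVec, ← dotProduct_mulVec, hA.mulVec_eigenvectorBasis, dotProduct_smul,
    smul_eq_mul]

lemma sum_sq_dotProduct_eigenvectorBasis (hA : A.IsHermitian) (v : ι → ℝ) :
    ∑ i, (v ⬝ᵥ ⇑(hA.eigenvectorBasis i)) ^ 2 = v ⬝ᵥ v := by
  rw [← EuclideanSpace.norm_toLp_sq, ← hA.eigenvectorBasis.sum_sq_inner_right]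
  simp only [EuclideanSpace.inner_toLp_right]

lemma dotProduct_mulVec_eq_sum (hA : A.IsHermitian) (v : ι → ℝ) :
    v ⬝ᵥ (A *ᵥ v) = ∑ i, hA.eigenvalues i * (v ⬝ᵥ ⇑(hA.eigenvectorBasis i)) ^ 2 := by
  have h := hA.eigenvectorBasis.sum_inner_mul_inner (toLp 2 v) (toLp 2 (A *ᵥ v))
  simp only [EuclideanSpace.inner_toLp_left, EuclideanSpace.inner_toLp_right,
    hA.mulVec_dotProduct_eigenvectorBasis] at h
  rw [dotProduct_comm, ← h]
  exact Finset.sum_congr rfl fun i _ => by ring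

lemma dotProduct_mulVec_le (hA : A.IsHermitian) {v : ι → ℝ} {μ : ℝ} {i₀ : ι}
    (hv : v ⬝ᵥ ⇑(hA.eigenvectorBasis i₀) = 0) (hμ : ∀ i ≠ i₀, hA.eigenvalues i ≤ μ) :
    v ⬝ᵥ (A *ᵥ v) ≤ μ * (v ⬝ᵥ v) := by
  rw [hA.dotProduct_mulVec_eq_sum, ← hA.sum_sq_dotProduct_eigenvectorBasis, Finset.mul_sum]
  refine Finset.sum_le_sum fun i _ => ?_
  rcases eq_or_ne i i₀ with rfl | hi
  · simp [hv]
  · exact mul_le_mul_of_nonneg_right (hμ i hi) (sq_nonneg _)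

lemma norm_toLp_le_norm_vecMul_one_sub_div (hA : A.IsHermitian) {v : ι → ℝ} {μ : ℝ} {i₀ : ι}
    (hv : v ⬝ᵥ ⇑(hA.eigenvectorBasis i₀) = 0) (hμ : ∀ i ≠ i₀, hA.eigenvalues i ≤ μ)
    (hμ₁ : μ < 1) : ‖toLp 2 v‖ ≤ ‖toLp 2 (v ᵥ* (1 - A))‖ / (1 - μ) := by
  refine le_div_of_mul_sq_le (by linarith) (norm_nonneg _) (norm_nonneg _) ?_
  calc (1 - μ) * ‖toLp 2 v‖ ^ 2 = v ⬝ᵥ v - μ * (v ⬝ᵥ v) := by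
        rw [EuclideanSpace.norm_toLp_sq]; ring
    _ ≤ v ⬝ᵥ v - v ⬝ᵥ (A *ᵥ v) := by linarith [hA.dotProduct_mulVec_le hv hμ]
    _ = inner ℝ (toLp 2 (v ᵥ* (1 - A))) (toLp 2 v) := by
        rw [EuclideanSpace.inner_toLp_left, ← dotProduct_mulVec, dotProduct_comm, sub_mulVec,
          one_mulVec, dotProduct_sub]
    _ ≤ ‖toLp 2 (v ᵥ* (1 - A))‖ * ‖toLp 2 v‖ := real_inner_le_norm _ _

lemma eigenvalues_ne_of_forall_eigenvector_const (hA : A.IsHermitian) {μ : ℝ}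
    (hconst : ∀ u, A *ᵥ u = μ • u → ∀ k l, u k = u l) {i₀ i₁ : ι} (hne : i₁ ≠ i₀)
    (h₀ : hA.eigenvalues i₀ = μ) : hA.eigenvalues i₁ ≠ μ := by
  intro h₁
  -- Both eigenvectors would be constant, hence parallel: `0 = ⟪b₀, b₁⟫² = ‖b₀‖² ‖b₁‖² = 1`.
  have hB := orthonormal_iff_ite.mp hA.eigenvectorBasis.orthonormal
  simp only [EuclideanSpace.inner_eq_star_dotProduct, star_trivial] at hB
  have hcs := sq_dotProduct_of_const
    (hconst _ (h₀ ▸ hA.mulVec_eigenvectorBasis i₀)) (hconst _ (h₁ ▸ hA.mulVec_eigenvectorBasis i₁))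
  simp [hB, hne] at hcs

end Matrix.IsHermitian

lemma eq_of_isPath {n : ℕ} {E : Fin n → Fin n → Prop} {α : Type*} {u : Fin n → α}
    (hu : ∀ a b, E a b → u a = u b) {i j : Fin n} {L : ℕ} (h : isPath E i j L) : u i = u j := by
  obtain ⟨f, rfl, rfl, hf⟩ := h
  suffices ∀ l ≤ L, u (f 0) = u (f l) from this L le_rfl
  intro l hl
  induction l with
  | zero => rfl
  | succ l ih => rw [ih (by omega), hu _ _ (hf l hl)]

section

variable {n : ℕ}

lemma eVec_eq_single (i : Fin n) : eVec i = Pi.single i 1 :=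
  funext fun k => (Pi.single_apply i 1 k).symm

lemma one_sub_Amat (i j : Fin n) :
    1 - Amat i j = (2⁻¹ : ℝ) • vecMulVec (eVec i - eVec j) (eVec i - eVec j) :=
  sub_sub_cancel _ _

lemma dotProduct_eVec_sub_eVec (u : Fin n → ℝ) (i j : Fin n) :
    u ⬝ᵥ (eVec i - eVec j) = u i - u j := by
  simp [eVec_eq_single, dotProduct_sub]

lemma one_vecMul_one_sub_Amat (i j : Fin n) : 1 ᵥ* (1 - Amat i j) = 0 := by
  rw [one_sub_Amat, vecMul_smul, vecMul_vecMulVec, dotProduct_eVec_sub_eVec]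
  simp

lemma dotProduct_one_sub_Amat_mulVec (u : Fin n → ℝ) (i j : Fin n) :
    u ⬝ᵥ ((1 - Amat i j) *ᵥ u) = (u i - u j) ^ 2 / 2 := by
  rw [dotProduct_mulVec, one_sub_Amat, vecMul_smul, vecMul_vecMulVec, dotProduct_eVec_sub_eVec,
    smul_dotProduct, smul_dotProduct, dotProduct_comm, dotProduct_eVec_sub_eVec]
  simp only [smul_eq_mul]
  ring

lemma one_sub_socT (p γ : Fin n → Fin n → ℝ) (hp_row : ∀ i, ∑ j, p i j = 1) :
    1 - socT p γ = (n : ℝ)⁻¹ • ∑ i, ∑ j, (p i j * (1 - γ i j)) • (1 - Amat i j) := by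
  rcases Nat.eq_zero_or_pos n with rfl | hn
  · exact Subsingleton.elim _ _
  have h1 : (1 : Matrix (Fin n) (Fin n) ℝ) = (n : ℝ)⁻¹ • ∑ i, ∑ j, p i j • 1 := by
    simp only [← Finset.sum_smul, hp_row, one_smul, Finset.sum_const, Finset.card_univ,
      Fintype.card_fin, ← Nat.cast_smul_eq_nsmul ℝ, smul_smul]
    rw [inv_mul_cancel₀ (by positivity), one_smul]
  conv_lhs => rw [h1]
  rw [socT, ← smul_sub, ← Finset.sum_sub_distrib]
  congr 1
  refine Finset.sum_congr rfl fun i _ => ?_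
  rw [← Finset.sum_sub_distrib]
  refine Finset.sum_congr rfl fun j _ => ?_
  module

lemma one_vecMul_one_sub_socT (p γ : Fin n → Fin n → ℝ) (hp_row : ∀ i, ∑ j, p i j = 1) :
    1 ᵥ* (1 - socT p γ) = 0 := by
  simp [one_sub_socT p γ hp_row, vecMul_smul, vecMul_sum, one_vecMul_one_sub_Amat]

lemma dotProduct_one_sub_socT_mulVec (p γ : Fin n → Fin n → ℝ) (hp_row : ∀ i, ∑ j, p i j = 1)
    (u : Fin n → ℝ) : u ⬝ᵥ ((1 - socT p γ) *ᵥ u) =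
      (n : ℝ)⁻¹ * ∑ i, ∑ j, p i j * (1 - γ i j) * ((u i - u j) ^ 2 / 2) := by
  simp [one_sub_socT p γ hp_row, smul_mulVec, sum_mulVec, dotProduct_sum,
    dotProduct_one_sub_Amat_mulVec]

lemma eq_of_socT_mulVec_eq_self {p γ : Fin n → Fin n → ℝ} (hp_nonneg : ∀ i j, 0 ≤ p i j)
    (hp_row : ∀ i, ∑ j, p i j = 1) (hγ_le : ∀ i j, γ i j ≤ 1)
    (hγ_lt : ∀ i j, 0 < p i j → γ i j < 1)
    (hconn : ∀ i j : Fin n, ∃ L, isPath (fun a b => 0 < p a b) i j L)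
    {u : Fin n → ℝ} (hu : socT p γ *ᵥ u = u) (i j : Fin n) : u i = u j := by
  have hterm : ∀ a b, 0 ≤ p a b * (1 - γ a b) * ((u a - u b) ^ 2 / 2) := fun a b =>
    mul_nonneg (mul_nonneg (hp_nonneg a b) (sub_nonneg.2 (hγ_le a b))) (by positivity)
  have hsum : ∑ a, ∑ b, p a b * (1 - γ a b) * ((u a - u b) ^ 2 / 2) = 0 := by
    have h := dotProduct_one_sub_socT_mulVec p γ hp_row u
    rw [sub_mulVec, one_mulVec, hu, sub_self, dotProduct_zero, eq_comm] at h
    exact (mul_eq_zero.mp h).resolve_left (by simp [i.pos.ne'])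
  have hedge : ∀ a b, 0 < p a b → u a = u b := by
    intro a b hab
    have hrow := (Fintype.sum_eq_zero_iff_of_nonneg fun a =>
      Finset.sum_nonneg fun b _ => hterm a b).mp hsum
    have hab0 := congrFun ((Fintype.sum_eq_zero_iff_of_nonneg (hterm a)).mp (congrFun hrow a)) b
    have hw : 0 < p a b * (1 - γ a b) := mul_pos hab (sub_pos.2 (hγ_lt a b hab))
    have hsq : (u a - u b) ^ 2 = 0 := by simpa [hw.ne'] using hab0
    exact sub_eq_zero.mp (pow_eq_zero_iff two_ne_zero |>.mp hsq)
  obtain ⟨L, hL⟩ := hconn i j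
  exact eq_of_isPath hedge hL

lemma vecMul_Jmat_sub_Amat (ε : ℝ) (π : Fin n → ℝ) (i j : Fin n) :
    π ᵥ* (Jmat ε i j - Amat i j) = ((ε - 2⁻¹) * π i - 2⁻¹ * π j) • (eVec i - eVec j) := by
  rw [← sub_sub_sub_cancel_left (Amat i j) (Jmat ε i j) 1, one_sub_Amat, Jmat, sub_sub_cancel,
    vecMul_sub, vecMul_smul, vecMul_smul, vecMul_vecMulVec, vecMul_vecMulVec,
    dotProduct_eVec_sub_eVec, eVec_eq_single, dotProduct_single]
  module

lemma norm_toLp_vecMul_Jmat_sub_Amat_le {ε : ℝ} (hε₀ : 0 ≤ ε) (hε : ε ≤ 1 / 2)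
    {π : Fin n → ℝ} (hπ₀ : ∀ k, 0 ≤ π k) (hπ₁ : ∑ k, π k = 1) (i j : Fin n) :
    ‖toLp 2 (π ᵥ* (Jmat ε i j - Amat i j))‖ ≤ 1 := by
  rw [vecMul_Jmat_sub_Amat]
  rcases eq_or_ne i j with rfl | hij
  · simp
  have hpair : π i + π j ≤ 1 := by
    rw [← hπ₁, ← Finset.sum_pair hij]
    exact Finset.sum_le_univ_sum_of_nonneg hπ₀
  have hc : |(ε - 2⁻¹) * π i - 2⁻¹ * π j| ≤ 2⁻¹ := by
    rw [abs_le]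
    constructor <;> nlinarith [hπ₀ i, hπ₀ j]
  have hd : ‖toLp 2 (eVec i - eVec j)‖ ≤ 2 := by
    rw [toLp_sub]
    refine (norm_sub_le _ _).trans ?_
    norm_num [eVec_eq_single, PiLp.norm_single]
  rw [toLp_smul, norm_smul, Real.norm_eq_abs]
  calc _ ≤ 2⁻¹ * 2 := mul_le_mul hc hd (norm_nonneg _) (by norm_num)
    _ = 1 := by norm_num

lemma norm_toLp_vecMul_infD_le {p α : Fin n → Fin n → ℝ} (hp_nonneg : ∀ i j, 0 ≤ p i j)
    (hα : ∀ i j, 0 ≤ α i j) {ε : ℝ} (hε₀ : 0 ≤ ε) (hε : ε ≤ 1 / 2)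
    {π : Fin n → ℝ} (hπ₀ : ∀ k, 0 ≤ π k) (hπ₁ : ∑ k, π k = 1) :
    ‖toLp 2 (π ᵥ* infD p α ε)‖ ≤ (∑ i, ∑ j, p i j * α i j) / n := by
  have hterm : ∀ i j,
      ‖toLp 2 (π ᵥ* ((p i j * α i j) • (Jmat ε i j - Amat i j)))‖ ≤ p i j * α i j :=
    fun i j => by
      have hpα := mul_nonneg (hp_nonneg i j) (hα i j)
      rw [vecMul_smul, toLp_smul, norm_smul, Real.norm_eq_abs, abs_of_nonneg hpα]
      exact mul_le_of_le_one_right hpα (norm_toLp_vecMul_Jmat_sub_Amat_le hε₀ hε hπ₀ hπ₁ i j)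
  rw [infD, vecMul_smul, toLp_smul, norm_smul, Real.norm_eq_abs, abs_inv, Nat.abs_cast,
    inv_mul_eq_div]
  gcongr
  simp only [vecMul_sum, toLp_sum]
  exact (norm_sum_le _ _).trans (Finset.sum_le_sum fun i _ =>
    (norm_sum_le _ _).trans (Finset.sum_le_sum fun j _ => hterm i j))

end

theorem stmt_7_general {n : ℕ}
    (p α β γ : Fin n → Fin n → ℝ)
    (hp_nonneg : ∀ i j, 0 ≤ p i j) (hp_row : ∀ i, ∑ j, p i j = 1)
    (hconn : ∀ i j : Fin n, ∃ L, isPath (fun a b => 0 < p a b) i j L)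
    (hα : ∀ i j, 0 ≤ α i j) (hβ : ∀ i j, 0 ≤ β i j)
    (habg : ∀ i j, α i j + β i j + γ i j = 1)
    (hint : ∀ i j, 0 < p i j → 0 < β i j + α i j)
    (ε : ℝ) (hε0 : 0 < ε) (hε : ε ≤ 1 / 2)
    -- π̄ : the consensus distribution
    (πbar : Fin n → ℝ) (hπ_nonneg : ∀ i, 0 ≤ πbar i) (hπ_sum : ∑ i, πbar i = 1)
    (hπ_stat : Matrix.vecMul πbar (socT p γ + infD p α ε) = πbar)
    -- T is symmetric (Hermitian over ℝ)
    (hT : (socT p γ).IsHermitian)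
    -- λ₂ : the second largest eigenvalue of T (the largest being 1)
    (lam2 : ℝ)
    (hlam2 : ∃ i0 : Fin n, hT.eigenvalues i0 = 1 ∧ (∀ i, hT.eigenvalues i ≤ 1) ∧
      IsGreatest {x : ℝ | ∃ i : Fin n, i ≠ i0 ∧ hT.eigenvalues i = x} lam2) :
    Real.sqrt (∑ k, (πbar k - 1 / n) ^ 2) ≤
      (1 / (1 - lam2)) * ((∑ i, ∑ j, p i j * α i j) / n) := by
  obtain ⟨i₀, h₀, hle, ⟨i₁, hi₁, h₁⟩, hlam2⟩ := hlam2
  have hγ_le : ∀ i j, γ i j ≤ 1 := fun i j => by linarith [hα i j, hβ i j, habg i j]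
  have hγ_lt : ∀ i j, 0 < p i j → γ i j < 1 := fun i j h => by linarith [hint i j h, habg i j]
  have hker : ∀ u, socT p γ *ᵥ u = (1 : ℝ) • u → ∀ k l, u k = u l := fun u hu =>
    eq_of_socT_mulVec_eq_self hp_nonneg hp_row hγ_le hγ_lt hconn (by rwa [one_smul] at hu)
  have hgap : lam2 < 1 :=
    h₁ ▸ (hle i₁).lt_of_ne (hT.eigenvalues_ne_of_forall_eigenvector_const hker hi₁ h₀)
  set v : Fin n → ℝ := fun k => πbar k - 1 / n
  have hv : v ⬝ᵥ ⇑(hT.eigenvectorBasis i₀) = 0 := by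
    refine dotProduct_eq_zero_of_const (hker _ (h₀ ▸ hT.mulVec_eigenvectorBasis i₀)) ?_
    simp [v, Finset.sum_sub_distrib, hπ_sum, i₀.pos.ne']
  have hw : v ᵥ* (1 - socT p γ) = πbar ᵥ* infD p α ε := by
    have hv' : v = πbar - (1 / n : ℝ) • 1 := by ext; simp [v]
    rw [hv', sub_vecMul, smul_vecMul, one_vecMul_one_sub_socT p γ hp_row, smul_zero, sub_zero,
      vecMul_sub, vecMul_one, sub_eq_iff_eq_add', ← vecMul_add, hπ_stat]
  calc √(∑ k, (πbar k - 1 / n) ^ 2) = ‖toLp 2 v‖ := (EuclideanSpace.norm_toLp v).symm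
    _ ≤ ‖toLp 2 (v ᵥ* (1 - socT p γ))‖ / (1 - lam2) :=
      hT.norm_toLp_le_norm_vecMul_one_sub_div hv (fun i hi => hlam2 ⟨i, hi, rfl⟩) hgap
    _ ≤ (∑ i, ∑ j, p i j * α i j) / n / (1 - lam2) := by
      rw [hw]
      gcongr
      exact norm_toLp_vecMul_infD_le hp_nonneg hα hε0.le hε hπ_nonneg hπ_sum
    _ = _ := by ring

/-- Theorem 6: under Assumptions 1–3, the consensus distribution `π̄` satisfies
`‖π̄ − (1/n)e‖₂ ≤ (1/(1−λ₂(T))) · (Σ_{i,j} p_ij α_ij)/n`, where `λ₂(T)` is the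
second largest eigenvalue of the symmetric social network matrix `T`. -/
theorem stmt_7 {n : ℕ} (hn : 2 ≤ n)
    (p α β γ : Fin n → Fin n → ℝ)
    (hp_diag : ∀ i, p i i = 0) (hp_nonneg : ∀ i j, 0 ≤ p i j) (hp_row : ∀ i, ∑ j, p i j = 1)
    (hconn : ∀ i j : Fin n, ∃ L, isPath (fun a b => 0 < p a b) i j L)
    (hα : ∀ i j, 0 ≤ α i j) (hβ : ∀ i j, 0 ≤ β i j) (hγ : ∀ i j, 0 ≤ γ i j)
    (habg : ∀ i j, α i j + β i j + γ i j = 1)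
    (hint : ∀ i j, 0 < p i j → 0 < β i j + α i j)
    (ε : ℝ) (hε0 : 0 < ε) (hε : ε ≤ 1 / 2)
    -- π̄ : the consensus distribution
    (πbar : Fin n → ℝ) (hπ_nonneg : ∀ i, 0 ≤ πbar i) (hπ_sum : ∑ i, πbar i = 1)
    (hπ_stat : Matrix.vecMul πbar (socT p γ + infD p α ε) = πbar)
    -- T is symmetric (Hermitian over ℝ)
    (hT : (socT p γ).IsHermitian)
    -- λ₂ : the second largest eigenvalue of T (the largest being 1)
    (lam2 : ℝ)
    (hlam2 : ∃ i0 : Fin n, hT.eigenvalues i0 = 1 ∧ (∀ i, hT.eigenvalues i ≤ 1) ∧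
      IsGreatest {x : ℝ | ∃ i : Fin n, i ≠ i0 ∧ hT.eigenvalues i = x} lam2) :
    Real.sqrt (∑ k, (πbar k - 1 / n) ^ 2) ≤
      (1 / (1 - lam2)) * ((∑ i, ∑ j, p i j * α i j) / n) :=
  stmt_7_general p α β γ hp_nonneg hp_row hconn hα hβ habg hint ε hε0 hε πbar hπ_nonneg hπ_sum
    hπ_stat hT lam2 hlam2
end
end
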